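/- arXiv:2008.13287 — 4 statements merged into one kernel-verified Lean document; each statement's English description precedes it below -/
import Mathlib

section
/- Let ψ = φ^⟨-1⟩ be the compositional inverse of φ (so ψ(0) = 0, ψ∘φ = φ∘ψ = t), and let B be the upper triangular matrix with entries [B]_{k,n} = (a_k/a_n)·(1/k!)·(d/dt)^n_{t=0}[ (ψ(t)/h(ψ(t)))^k · (g(ψ(t)))^{-1} ] for 1 ≤ k ≤ n, where (g∘ψ)^{-1} denotes the multiplicative inverse of the power series g∘ψ (which exists since g(0) ≠ 0), and ψ/(h∘ψ) denotes ψ multiplied by the multiplicative inverse of h∘ψ (which exists since h(0) ≠ 0). Then A·B = B·A = I. -/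
open PowerSeries Finset

noncomputable section

/-- Product of two infinite matrices of complex numbers (indexed by positive integers,
upper triangular): `[A·B]_{k,n} = ∑_{j=k}^{n} [A]_{k,j}·[B]_{j,n}`. -/
def triMul (A B : ℕ → ℕ → ℂ) : ℕ → ℕ → ℂ :=
  fun k n => ∑ j ∈ Finset.Icc k n, A k j * B j n

/-- The identity matrix. -/
def triId : ℕ → ℕ → ℂ := fun k n => if k = n then 1 else 0

/-- Powers of a matrix: `A^0 = I`, `A^{s+1} = A^s · A`. -/
def triPow (A : ℕ → ℕ → ℂ) : ℕ → ℕ → ℕ → ℂ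
  | 0 => triId
  | s + 1 => triMul (triPow A s) A

/-- Composition `F ∘ G` of formal power series (intended for `G` with zero
constant coefficient): the coefficient of `t^n` is `∑_{j=0}^{n} F_j · [t^n](G^j)`. -/
def psComp (F G : PowerSeries ℂ) : PowerSeries ℂ :=
  PowerSeries.mk fun n =>
    ∑ j ∈ Finset.range (n + 1), (PowerSeries.coeff j F) * (PowerSeries.coeff n (G ^ j))

/-- Iterated composition: `φ^⟨0⟩ = t`, `φ^⟨s+1⟩ = φ^⟨s⟩ ∘ φ`. -/
def iterComp (φ : PowerSeries ℂ) : ℕ → PowerSeries ℂ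
  | 0 => PowerSeries.X
  | s + 1 => psComp (iterComp φ s) φ

/-!
Substituting `φ` into `E_k = (ψ / h∘ψ)^k / g∘ψ` gives `(X / h)^k / g`. Since `F ↦ [X^(n-1)] h^n F'`
is linear and only sees the coefficients of `F` up to `X^n`, this turns
`∑_j [X^j] E_k · [X^(n-1)] h^n (φ^j g)'` into `[X^(n-1)] h^n ((X / h)^k)'`. For `n = k + m` that
series is `k X^(k-1) (h^m - X h^(m-1) h')`, and its coefficient is `k δ_{m,0}` because
`[X^(m-1)] h^(m-1) h' = [X^m] h^m`. This is `B A = I`; on the finite blocks of indices `1, …, N`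
it is an identity of square matrices, so `A B = I` as well.
-/

namespace PowerSeries

theorem coeff_mul_derivative_eq_of_trunc_eq {R : Type*} [CommSemiring R] {F G : R⟦X⟧}
    (H : R⟦X⟧) {n : ℕ} (hFG : trunc (n + 2) F = trunc (n + 2) G) :
    coeff n (H * d⁄dX R F) = coeff n (H * d⁄dX R G) := by
  rw [coeff_mul_eq_coeff_trunc_mul_trunc _ _ n.lt_succ_self, trunc_derivative, hFG,
    ← trunc_derivative, ← coeff_mul_eq_coeff_trunc_mul_trunc _ _ n.lt_succ_self]

section CommRing

variable {R : Type*} [CommRing R]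

theorem coeff_subst_eq_sum_range {G : R⟦X⟧} (hG : constantCoeff G = 0) (F : R⟦X⟧) {m N : ℕ}
    (hmN : m < N) : coeff m (subst G F) = ∑ j ∈ range N, coeff j F * coeff m (G ^ j) := by
  rw [coeff_subst' (.of_constantCoeff_zero' hG)]
  refine finsum_eq_sum_of_support_subset _ fun j hj => ?_
  by_contra hjN
  refine hj ?_
  have hlt : (m : ℕ∞) < j := by simp at hjN; exact_mod_cast hmN.trans_le hjN
  change coeff j F • coeff m (G ^ j) = 0
  rw [coeff_of_lt_order m (hlt.trans_le (le_order_pow_of_constantCoeff_eq_zero j hG)), smul_zero]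

theorem constantCoeff_subst_of_constantCoeff_eq_zero {G : R⟦X⟧} (hG : constantCoeff G = 0)
    (F : R⟦X⟧) : constantCoeff (subst G F) = constantCoeff F := by
  simpa using coeff_subst_eq_sum_range hG F zero_lt_one

theorem sum_coeff_mul_coeff_mul_derivative_pow_mul {φ : R⟦X⟧} (hφ : constantCoeff φ = 0)
    (E g H : R⟦X⟧) (n : ℕ) :
    ∑ j ∈ range (n + 2), coeff j E * coeff n (H * d⁄dX R (φ ^ j * g)) =
      coeff n (H * d⁄dX R (subst φ E * g)) := by
  have htrunc : trunc (n + 2) (∑ j ∈ range (n + 2), coeff j E • φ ^ j) =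
      trunc (n + 2) (subst φ E) := by
    ext m
    simp only [coeff_trunc]
    split_ifs with hm
    · simp [map_sum, coeff_subst_eq_sum_range hφ E hm]
    · rfl
  have htrunc_mul : trunc (n + 2) ((∑ j ∈ range (n + 2), coeff j E • φ ^ j) * g) =
      trunc (n + 2) (subst φ E * g) := by
    rw [← trunc_trunc_mul, htrunc, trunc_trunc_mul]
  rw [← coeff_mul_derivative_eq_of_trunc_eq H htrunc_mul]
  simp only [sum_mul, smul_mul_assoc, map_sum, mul_sum, Derivation.map_smul, mul_smul_comm,
    map_smul, smul_eq_mul]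

end CommRing

section Field

variable {K : Type*} [Field K]

theorem subst_inv {F G : K⟦X⟧} (hF : constantCoeff F ≠ 0) (hG : HasSubst G) :
    subst G F⁻¹ = (subst G F)⁻¹ := by
  have hmul : subst G F⁻¹ * subst G F = 1 := by
    rw [← subst_mul hG, PowerSeries.inv_mul_cancel _ hF, ← coe_substAlgHom hG, map_one]
  have hc : constantCoeff (subst G F) ≠ 0 :=
    right_ne_zero_of_mul_eq_one (by simpa using congrArg constantCoeff hmul)
  exact (eq_inv_iff_mul_eq_one hc).2 hmul

theorem subst_mul_inv_subst_pow_mul_inv_subst {φ ψ g h : K⟦X⟧} (hφ : constantCoeff φ = 0)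
    (hψ : constantCoeff ψ = 0) (hg : constantCoeff g ≠ 0) (hh : constantCoeff h ≠ 0)
    (hψφ : subst φ ψ = X) (k : ℕ) :
    subst φ ((ψ * (subst ψ h)⁻¹) ^ k * (subst ψ g)⁻¹) * g = (X * h⁻¹) ^ k := by
  have hφ' : HasSubst φ := .of_constantCoeff_zero' hφ
  have hψ' : HasSubst ψ := .of_constantCoeff_zero' hψ
  have hsubst_subst : ∀ F : K⟦X⟧, subst φ (subst ψ F) = F := fun F => by
    rw [subst_comp_subst_apply hψ' hφ', hψφ, X_subst]
  rw [subst_mul hφ', subst_pow hφ', subst_mul hφ',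
    subst_inv (by rwa [constantCoeff_subst_of_constantCoeff_eq_zero hψ]) hφ',
    subst_inv (by rwa [constantCoeff_subst_of_constantCoeff_eq_zero hψ]) hφ',
    hsubst_subst, hsubst_subst, hψφ, mul_assoc, PowerSeries.inv_mul_cancel _ hg, mul_one]

variable [CharZero K]

theorem coeff_pow_mul_derivative (f : K⟦X⟧) (p : ℕ) :
    coeff p (f ^ p * d⁄dX K f) = coeff (p + 1) (f ^ (p + 1)) := by
  have h := coeff_derivative (f ^ (p + 1)) p
  rw [derivative_pow, ← map_natCast (C (R := K)), mul_assoc, coeff_C_mul, Nat.add_sub_cancel,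
    mul_comm] at h
  push_cast at h
  exact mul_right_cancel₀ (Nat.cast_add_one_ne_zero p) h

theorem coeff_pow_mul_derivative_X_mul_inv_pow {h : K⟦X⟧} (hh : constantCoeff h ≠ 0) {k n : ℕ}
    (hk : 1 ≤ k) (hkn : k ≤ n) :
    coeff (n - 1) (h ^ n * d⁄dX K ((X * h⁻¹) ^ k)) = if k = n then (k : K) else 0 := by
  obtain ⟨k, rfl⟩ : ∃ k', k = k' + 1 := ⟨k - 1, by omega⟩
  obtain ⟨m, rfl⟩ : ∃ m, n = k + 1 + m := ⟨n - (k + 1), by omega⟩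
  have hpow : h ^ (k + 1) * h⁻¹ ^ (k + 1) = 1 := by
    rw [← mul_pow, PowerSeries.mul_inv_cancel _ hh, one_pow]
  have hder : h ^ (k + 1 + m) * d⁄dX K ((X * h⁻¹) ^ (k + 1)) =
      C ((k + 1 : ℕ) : K) * X ^ k * (h ^ m - X * (h ^ m * h⁻¹ * d⁄dX K h)) := by
    rw [derivative_pow, Derivation.leibniz, derivative_X, derivative_inv', map_natCast]
    simp only [Nat.add_sub_cancel, smul_eq_mul]
    linear_combination ((k + 1 : ℕ) : K⟦X⟧) * X ^ k * h ^ m * (1 - X * h⁻¹ * d⁄dX K h) * hpow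
  rw [hder, show k + 1 + m - 1 = m + k by omega, mul_assoc, coeff_C_mul, coeff_X_pow_mul]
  rcases m with _ | m
  · simp
  · have hcancel : h ^ (m + 1) * h⁻¹ = h ^ m := by
      rw [pow_succ, mul_assoc, PowerSeries.mul_inv_cancel _ hh, mul_one]
    rw [hcancel, map_sub, coeff_succ_X_mul, coeff_pow_mul_derivative, sub_self]
    simp

theorem sum_coeff_mul_coeff_mul_derivative_eq_ite {φ ψ g h : K⟦X⟧} (hφ : constantCoeff φ = 0)
    (hψ : constantCoeff ψ = 0) (hg : constantCoeff g ≠ 0) (hh : constantCoeff h ≠ 0)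
    (hψφ : subst φ ψ = X) {k n : ℕ} (hk : 1 ≤ k) (hkn : k ≤ n) :
    ∑ j ∈ Icc k n, coeff j ((ψ * (subst ψ h)⁻¹) ^ k * (subst ψ g)⁻¹) *
        coeff (n - 1) (h ^ n * d⁄dX K (φ ^ j * g)) =
      if k = n then (k : K) else 0 := by
  have hE_low : ∀ j < k, coeff j ((ψ * (subst ψ h)⁻¹) ^ k * (subst ψ g)⁻¹) = 0 :=
    X_pow_dvd_iff.mp <|
      dvd_mul_of_dvd_left (pow_dvd_pow_of_dvd (dvd_mul_of_dvd_left (X_dvd_iff.mpr hψ) _) k) _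
  obtain ⟨n, rfl⟩ : ∃ n', n = n' + 1 := ⟨n - 1, by omega⟩
  rw [← coeff_pow_mul_derivative_X_mul_inv_pow hh hk hkn,
    ← subst_mul_inv_subst_pow_mul_inv_subst hφ hψ hg hh hψφ k, Nat.add_sub_cancel,
    ← sum_coeff_mul_coeff_mul_derivative_pow_mul hφ]
  refine sum_subset (fun j hj => by simp at hj ⊢; omega) fun j hj hjk => ?_
  rw [hE_low j (by simp at hj hjk; omega), zero_mul]

end Field

end PowerSeries

theorem psComp_eq_subst {G : ℂ⟦X⟧} (hG : constantCoeff G = 0) (F : ℂ⟦X⟧) :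
    psComp F G = subst G F := by
  ext n
  simp [psComp, coeff_subst_eq_sum_range hG F n.lt_succ_self]

def triTrunc (N : ℕ) (A : ℕ → ℕ → ℂ) : Matrix (Icc 1 N) (Icc 1 N) ℂ :=
  fun i j => if (i : ℕ) ≤ j then A i j else 0

theorem triTrunc_mul_triTrunc {N : ℕ} (A B : ℕ → ℕ → ℂ) (i j : Icc 1 N) :
    (triTrunc N A * triTrunc N B) i j = triMul A B i j := by
  obtain ⟨i, hi⟩ := i
  obtain ⟨j, hj⟩ := j
  rw [mem_Icc] at hi hj
  simp only [Matrix.mul_apply, triTrunc, triMul, ite_mul, zero_mul, mul_ite, mul_zero]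
  rw [sum_coe_sort (Icc 1 N) fun l => if l ≤ j then (if i ≤ l then A i l * B l j else 0) else 0]
  simp only [← ite_and, ← sum_filter]
  congr 1
  ext l
  simp only [mem_filter, mem_Icc]
  omega

theorem triId_eq_one_apply {N : ℕ} (i j : Icc 1 N) :
    triId i j = (1 : Matrix (Icc 1 N) (Icc 1 N) ℂ) i j := by
  rw [triId, Matrix.one_apply]
  exact if_congr Subtype.ext_iff.symm rfl rfl

theorem triMul_eq_triId_of_triMul_eq_triId {A B : ℕ → ℕ → ℂ}
    (hBA : ∀ k n, 1 ≤ k → 1 ≤ n → triMul B A k n = triId k n) {k n : ℕ} (hk : 1 ≤ k)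
    (hn : 1 ≤ n) : triMul A B k n = triId k n := by
  set N := max k n
  have hBA' : triTrunc N B * triTrunc N A = 1 := by
    ext i j
    rw [triTrunc_mul_triTrunc, hBA _ _ (mem_Icc.1 i.2).1 (mem_Icc.1 j.2).1, triId_eq_one_apply]
  have hAB := (mul_eq_one_comm (M := Matrix (Icc 1 N) (Icc 1 N) ℂ)).1 hBA'
  have := congrFun₂ hAB ⟨k, mem_Icc.2 ⟨hk, le_max_left k n⟩⟩ ⟨n, mem_Icc.2 ⟨hn, le_max_right k n⟩⟩
  rwa [triTrunc_mul_triTrunc, ← triId_eq_one_apply] at this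

theorem triMul_eq_triId_of_lt (A B : ℕ → ℕ → ℂ) {k n : ℕ} (hnk : n < k) :
    triMul A B k n = triId k n := by
  simp [triMul, triId, Icc_eq_empty_of_lt hnk, hnk.ne']

theorem div_mul_factorial_div_mul_ite_eq_triId {a : ℕ → ℂ} {k : ℕ} (n : ℕ) (hk : 1 ≤ k)
    (hak : a k ≠ 0) :
    a k / a n * ((n - 1).factorial / k.factorial) * (if k = n then (k : ℂ) else 0) =
      triId k n := by
  rw [triId]
  split_ifs with hkn
  · subst hkn
    have : (k : ℂ) ≠ 0 := Nat.cast_ne_zero.2 (by omega)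
    have : ((k - 1).factorial : ℂ) ≠ 0 := Nat.cast_ne_zero.2 (k - 1).factorial_ne_zero
    rw [← Nat.mul_factorial_pred (by omega : k ≠ 0)]
    push_cast
    field_simp
  · rw [mul_zero]

theorem stmt2_general (a : ℕ → ℂ) (ha : ∀ n, 1 ≤ n → a n ≠ 0)
    (φ g h : PowerSeries ℂ)
    (hφ0 : constantCoeff φ = 0)
    (hne : constantCoeff (derivativeFun φ) * constantCoeff g * constantCoeff h ≠ 0)
    (ψ : PowerSeries ℂ) (hψ0 : constantCoeff ψ = 0)
    (hψφ : psComp ψ φ = PowerSeries.X)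
    (A B : ℕ → ℕ → ℂ)
    (hA : ∀ k n, 1 ≤ k → k ≤ n →
      A k n = a k / a n * (1 / k.factorial) *
        (((n - 1).factorial : ℂ) * coeff (n - 1) (h ^ n * derivativeFun (φ ^ k * g))))
    (hB : ∀ k n, 1 ≤ k → k ≤ n →
      B k n = a k / a n * (1 / k.factorial) *
        ((n.factorial : ℂ) * coeff n ((ψ * (psComp h ψ)⁻¹) ^ k * (psComp g ψ)⁻¹))) :
    ∀ k n, 1 ≤ k → 1 ≤ n →
      triMul A B k n = triId k n ∧ triMul B A k n = triId k n := by
  obtain ⟨hφg, hh⟩ := mul_ne_zero_iff.1 hne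
  have hg := right_ne_zero_of_mul hφg
  rw [psComp_eq_subst hφ0] at hψφ
  simp only [psComp_eq_subst hψ0] at hB
  simp only [show ∀ f : ℂ⟦X⟧, derivativeFun f = d⁄dX ℂ f from fun _ => rfl] at hA
  have hBA : ∀ k n, 1 ≤ k → 1 ≤ n → triMul B A k n = triId k n := by
    intro k n hk _
    rcases lt_or_ge n k with hnk | hkn
    · exact triMul_eq_triId_of_lt B A hnk
    have hterm : ∀ j ∈ Icc k n, B k j * A j n = a k / a n * ((n - 1).factorial / k.factorial) *
        (coeff j ((ψ * (subst ψ h)⁻¹) ^ k * (subst ψ g)⁻¹) *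
          coeff (n - 1) (h ^ n * d⁄dX ℂ (φ ^ j * g))) := by
      intro j hj
      obtain ⟨hkj, hjn⟩ := mem_Icc.1 hj
      have := ha j (hk.trans hkj)
      have : (j.factorial : ℂ) ≠ 0 := Nat.cast_ne_zero.2 j.factorial_ne_zero
      rw [hB k j hk hkj, hA j n (hk.trans hkj) hjn]
      field_simp
    rw [triMul, sum_congr rfl hterm, ← mul_sum,
      sum_coeff_mul_coeff_mul_derivative_eq_ite hφ0 hψ0 hg hh hψφ hk hkn]
    exact div_mul_factorial_div_mul_ite_eq_triId n hk (ha k hk)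
  exact fun k n hk hn => ⟨triMul_eq_triId_of_triMul_eq_triId hBA hk hn, hBA k n hk hn⟩

/-- Theorem: with `ψ = φ^⟨-1⟩` the compositional inverse of `φ`, the matrix `B` with entries
`[B]_{k,n} = (a_k/a_n)·(1/k!)·(d/dt)^n_{t=0}[(ψ(t)/h(ψ(t)))^k · (g(ψ(t)))^{-1}]`
is a two-sided inverse of `A`. -/
theorem stmt2 (a : ℕ → ℂ) (ha : ∀ n, 1 ≤ n → a n ≠ 0)
    (φ g h : PowerSeries ℂ)
    (hφ0 : constantCoeff φ = 0)
    (hne : constantCoeff (derivativeFun φ) * constantCoeff g * constantCoeff h ≠ 0)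
    (ψ : PowerSeries ℂ) (hψ0 : constantCoeff ψ = 0)
    (hψφ : psComp ψ φ = PowerSeries.X) (hφψ : psComp φ ψ = PowerSeries.X)
    (A B : ℕ → ℕ → ℂ)
    (hAtri : ∀ k n, n < k → A k n = 0)
    (hBtri : ∀ k n, n < k → B k n = 0)
    (hA : ∀ k n, 1 ≤ k → k ≤ n →
      A k n = a k / a n * (1 / k.factorial) *
        (((n - 1).factorial : ℂ) * coeff (n - 1) (h ^ n * derivativeFun (φ ^ k * g))))
    (hB : ∀ k n, 1 ≤ k → k ≤ n →
      B k n = a k / a n * (1 / k.factorial) *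
        ((n.factorial : ℂ) * coeff n ((ψ * (psComp h ψ)⁻¹) ^ k * (psComp g ψ)⁻¹))) :
    ∀ k n, 1 ≤ k → 1 ≤ n →
      triMul A B k n = triId k n ∧ triMul B A k n = triId k n :=
  stmt2_general a ha φ g h hφ0 hne ψ hψ0 hψφ A B hA hB
end
end

section
/- For all integers n ≥ 1 and k ≥ 0, (d/dt)^{n-1}_{t=0}[ h(t)^n · (d/dt)(φ(t)^k·g(t)) ] = (d/dt)^n_{t=0}[ (φ(ω(t)))^k · g(ω(t)) ]. -/
open PowerSeries Finset

noncomputable section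

/-!
Put `ψ = X * h⁻¹`. The hypothesis on `ω` says `ψ(ω(t)) = t`, so `ω` and `ψ` are compositional
inverses and any series `F` (here `φ^k g`) is `G ∘ ψ` with `G = F ∘ ω`. Modulo `X ^ (n + 1)`,
`F` is therefore `∑_{m ≤ n} G_m ψ^m`, and `[t^(n-1)] h^n F'` only sees `F` modulo `X ^ (n + 1)`.
It remains to see that `[t^(n-1)] h^n (ψ^m)' = n δ_{m,n}`, which comes down to
`[t^j] h^(j+1) ψ' = δ_{j,0}`: for `j ≥ 1`, `h^(j+1) ψ' = h^j - (X / j) (h^j)'`, and both terms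
have the same coefficient of `t^j`.
-/

namespace PowerSeries

section CommRing

variable {R : Type*} [CommRing R]

theorem subst_eq_X_of_subst_eq_X {a b : R⟦X⟧} (ha : constantCoeff a = 0)
    (hb : constantCoeff b = 0) (hu : IsUnit (coeff 1 a)) (hab : a.subst b = X) :
    b.subst a = X := by
  have ha' := HasSubst.of_constantCoeff_zero' ha
  have hb' := HasSubst.of_constantCoeff_zero' hb
  have hinv : a.substInvOfIsUnit hu = b := by
    rw [← X_subst (a.substInvOfIsUnit hu), ← hab,
      ← subst_comp_subst_apply ha' hb', subst_substInvOfIsUnit_left a ha hu, subst_X hb']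
  rw [← hinv, subst_substInvOfIsUnit_left a ha hu]

theorem X_pow_dvd_subst_sub_subst {a F G : R⟦X⟧} (ha : constantCoeff a = 0) {N : ℕ}
    (hFG : X ^ N ∣ F - G) : X ^ N ∣ F.subst a - G.subst a := by
  have ha' := HasSubst.of_constantCoeff_zero' ha
  obtain ⟨Q, hQ⟩ := hFG
  rw [← subst_sub ha', hQ, subst_mul ha', subst_pow ha', subst_X ha']
  exact (pow_dvd_pow_of_dvd (X_dvd_iff.mpr ha) N).mul_right _

theorem X_pow_dvd_sub_trunc (F : R⟦X⟧) (N : ℕ) : X ^ N ∣ F - (trunc N F : R⟦X⟧) := by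
  refine X_pow_dvd_iff.mpr fun m hm => ?_
  rw [map_sub, coeff_coe_trunc_of_lt hm, sub_self]

theorem subst_trunc {a : R⟦X⟧} (ha : constantCoeff a = 0) (F : R⟦X⟧) (N : ℕ) :
    (trunc (N + 1) F : R⟦X⟧).subst a = ∑ m ∈ range (N + 1), coeff m F • a ^ m := by
  rw [subst_coe (HasSubst.of_constantCoeff_zero' ha),
    Polynomial.aeval_eq_sum_range' (natDegree_trunc_lt F N)]
  refine sum_congr rfl fun m hm => ?_
  rw [coeff_trunc, if_pos (mem_range.mp hm)]

theorem X_pow_dvd_derivative_of_X_pow_succ_dvd {F : R⟦X⟧} {n : ℕ} (hF : X ^ (n + 1) ∣ F) :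
    X ^ n ∣ d⁄dX R F := by
  obtain ⟨Q, rfl⟩ := hF
  rw [Derivation.leibniz, derivative_pow, derivative_X, smul_eq_mul, smul_eq_mul,
    Nat.add_sub_cancel]
  exact (dvd_mul_of_dvd_left (pow_dvd_pow _ n.le_succ) _).add
    (Dvd.intro_left (Q * (n + 1 : ℕ)) (by ring))

theorem coeff_mul_derivative_eq_of_X_pow_dvd_sub (f : R⟦X⟧) {F G : R⟦X⟧} {n : ℕ}
    (hFG : X ^ (n + 2) ∣ F - G) : coeff n (f * d⁄dX R F) = coeff n (f * d⁄dX R G) := by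
  rw [← sub_eq_zero, ← map_sub, ← mul_sub, ← map_sub]
  exact X_pow_dvd_iff.mp ((X_pow_dvd_derivative_of_X_pow_succ_dvd hFG).mul_left f) n
    (Nat.lt_succ_self n)

end CommRing

section Field

variable {K : Type*} [Field K]

theorem X_mul_inv_subst_eq_X {h ω : K⟦X⟧} (hω0 : constantCoeff ω = 0) (hh : constantCoeff h ≠ 0)
    (hω : ω = X * h.subst ω) : (X * h⁻¹).subst ω = X := by
  have hω' := HasSubst.of_constantCoeff_zero' hω0
  calc (X * h⁻¹).subst ω = ω * h⁻¹.subst ω := by rw [subst_mul hω', subst_X hω']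
    _ = X * (h * h⁻¹).subst ω := by rw [subst_mul hω', ← mul_assoc, ← hω]
    _ = X := by rw [PowerSeries.mul_inv_cancel h hh, ← coe_substAlgHom hω', map_one, mul_one]

theorem coeff_pow_succ_mul_derivative_X_mul_inv [CharZero K] {h : K⟦X⟧}
    (hh : constantCoeff h ≠ 0) (j : ℕ) :
    coeff j (h ^ (j + 1) * d⁄dX K (X * h⁻¹)) = if j = 0 then 1 else 0 := by
  have hψh : X * h⁻¹ * h = X := by rw [mul_assoc, PowerSeries.inv_mul_cancel h hh, mul_one]
  have hleib : h * d⁄dX K (X * h⁻¹) = 1 - X * h⁻¹ * d⁄dX K h := by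
    have := congrArg (d⁄dX K) hψh
    rw [Derivation.leibniz, derivative_X, smul_eq_mul, smul_eq_mul] at this
    linear_combination this
  rcases j with _ | j
  · rw [zero_add, pow_one, hleib, coeff_zero_eq_constantCoeff_apply]
    simp
  · have hsplit : h ^ (j + 2) * d⁄dX K (X * h⁻¹) = h ^ (j + 1) - X * (h ^ j * d⁄dX K h) := by
      linear_combination h ^ (j + 1) * hleib - h ^ j * d⁄dX K h * hψh
    have hpow : coeff j (d⁄dX K (h ^ (j + 1))) = (j + 1) * coeff j (h ^ j * d⁄dX K h) := by
      rw [derivative_pow, Nat.add_sub_cancel, mul_assoc, ← map_natCast (C (R := K)), coeff_C_mul]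
      push_cast
      rfl
    rw [coeff_derivative] at hpow
    rw [hsplit, map_sub, coeff_succ_X_mul, if_neg j.succ_ne_zero, sub_eq_zero]
    exact (mul_left_cancel₀ (Nat.cast_add_one_ne_zero j) (hpow.symm.trans (mul_comm _ _))).symm

theorem coeff_pow_succ_mul_derivative_X_mul_inv_pow [CharZero K] {h : K⟦X⟧}
    (hh : constantCoeff h ≠ 0) (n m : ℕ) :
    coeff n (h ^ (n + 1) * d⁄dX K ((X * h⁻¹) ^ m)) = if m = n + 1 then (n + 1 : K) else 0 := by
  rcases m with _ | m
  · simp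
  have hexpand : h ^ (n + 1) * d⁄dX K ((X * h⁻¹) ^ (m + 1)) =
      C (m + 1 : K) * (X ^ m * (h ^ (n + 1) * h⁻¹ ^ m * d⁄dX K (X * h⁻¹))) := by
    rw [derivative_pow, Nat.add_sub_cancel, mul_pow, map_add, map_one, map_natCast]
    push_cast
    ring
  rw [hexpand, coeff_C_mul, coeff_X_pow_mul']
  rcases le_or_gt m n with hmn | hmn
  · obtain ⟨j, rfl⟩ := Nat.exists_eq_add_of_le hmn
    have hcancel : h ^ (m + j + 1) * h⁻¹ ^ m = h ^ (j + 1) := by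
      rw [add_assoc, pow_add, mul_right_comm, ← mul_pow, PowerSeries.mul_inv_cancel h hh,
        one_pow, one_mul]
    rw [if_pos hmn, Nat.add_sub_cancel_left, hcancel,
      coeff_pow_succ_mul_derivative_X_mul_inv hh]
    rcases j with _ | j
    · simp
    · rw [if_neg j.succ_ne_zero, if_neg (by omega), mul_zero]
  · rw [if_neg (by omega), if_neg (by omega), mul_zero]

theorem coeff_pow_succ_mul_derivative_eq_coeff_subst [CharZero K] {h ω : K⟦X⟧}
    (hh : constantCoeff h ≠ 0) (hω0 : constantCoeff ω = 0) (hω : ω = X * h.subst ω)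
    (F : K⟦X⟧) (n : ℕ) :
    coeff n (h ^ (n + 1) * d⁄dX K F) = (n + 1) * coeff (n + 1) (F.subst ω) := by
  set ψ : K⟦X⟧ := X * h⁻¹
  set G : K⟦X⟧ := F.subst ω
  have hψ0 : constantCoeff ψ = 0 := by simp [ψ]
  have hψ1 : IsUnit (coeff 1 ψ) := by simpa [ψ, coeff_succ_X_mul] using hh
  have hωψ : ω.subst ψ = X :=
    subst_eq_X_of_subst_eq_X hψ0 hω0 hψ1 (X_mul_inv_subst_eq_X hω0 hh hω)
  have hF : F = G.subst ψ := by
    rw [subst_comp_subst_apply (HasSubst.of_constantCoeff_zero' hω0)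
      (HasSubst.of_constantCoeff_zero' hψ0), hωψ, X_subst]
  have hdiv : X ^ (n + 2) ∣ F - ∑ m ∈ range (n + 2), coeff m G • ψ ^ m := by
    rw [← subst_trunc hψ0, hF]
    exact X_pow_dvd_subst_sub_subst hψ0 (X_pow_dvd_sub_trunc G (n + 2))
  rw [coeff_mul_derivative_eq_of_X_pow_dvd_sub _ hdiv]
  calc coeff n (h ^ (n + 1) * d⁄dX K (∑ m ∈ range (n + 2), coeff m G • ψ ^ m))
      = ∑ m ∈ range (n + 2), coeff m G * coeff n (h ^ (n + 1) * d⁄dX K (ψ ^ m)) := by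
        simp only [map_sum, Derivation.map_smul, mul_sum, mul_smul_comm, map_smul, smul_eq_mul]
    _ = (n + 1) * coeff (n + 1) G := by
        simp only [ψ, coeff_pow_succ_mul_derivative_X_mul_inv_pow hh, mul_ite, mul_zero,
          sum_ite_eq', mem_range, if_pos (Nat.lt_succ_self (n + 1))]
        exact mul_comm _ _

end Field

end PowerSeries

theorem psComp_eq_subst_s4 {ω : ℂ⟦X⟧} (hω0 : constantCoeff ω = 0) (F : ℂ⟦X⟧) :
    psComp F ω = F.subst ω := by
  ext n
  have hsupp : (Function.support fun d => coeff d F • coeff n (ω ^ d)) ⊆ ↑(range (n + 1)) := by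
    intro d hd
    rw [coe_range, Set.mem_Iio, Nat.lt_succ_iff]
    by_contra hnd
    refine hd ?_
    simp only [coeff_of_lt_order n ((Nat.cast_lt.mpr (not_le.mp hnd)).trans_le
      (le_order_pow_of_constantCoeff_eq_zero d hω0)), smul_zero]
  rw [coeff_subst' (HasSubst.of_constantCoeff_zero' hω0), finsum_eq_sum_of_support_subset _ hsupp]
  simp only [psComp, coeff_mk, smul_eq_mul]

theorem stmt4_general (φ g h : PowerSeries ℂ)
    (hh0 : constantCoeff h ≠ 0)
    (ω : PowerSeries ℂ) (hω0 : constantCoeff ω = 0)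
    (hω : ω = PowerSeries.X * psComp h ω)
    (n k : ℕ) (hn : 1 ≤ n) :
    ((n - 1).factorial : ℂ) * coeff (n - 1) (h ^ n * derivativeFun (φ ^ k * g)) =
      (n.factorial : ℂ) * coeff n ((psComp φ ω) ^ k * psComp g ω) := by
  have hω0' := HasSubst.of_constantCoeff_zero' hω0
  obtain ⟨n, rfl⟩ := Nat.exists_eq_add_of_le' hn
  have hderiv : derivativeFun (φ ^ k * g) = d⁄dX ℂ (φ ^ k * g) := rfl
  rw [psComp_eq_subst_s4 hω0] at hω
  rw [hderiv, Nat.add_sub_cancel, coeff_pow_succ_mul_derivative_eq_coeff_subst hh0 hω0 hω,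
    subst_mul hω0', subst_pow hω0', psComp_eq_subst_s4 hω0, psComp_eq_subst_s4 hω0,
    Nat.factorial_succ]
  push_cast
  ring

/-- Lagrange inversion identity: for all `n ≥ 1` and `k ≥ 0`,
`(d/dt)^{n-1}_{t=0}[h(t)^n · (d/dt)(φ(t)^k·g(t))] = (d/dt)^n_{t=0}[(φ(ω(t)))^k · g(ω(t))]`,
where `ω` is the unique power series with `ω(0) = 0` and `ω(t) = t·h(ω(t))`. -/
theorem stmt4 (φ g h : PowerSeries ℂ)
    (hφ0 : constantCoeff φ = 0)
    (hh0 : constantCoeff h ≠ 0)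
    (ω : PowerSeries ℂ) (hω0 : constantCoeff ω = 0)
    (hω : ω = PowerSeries.X * psComp h ω)
    (n k : ℕ) (hn : 1 ≤ n) :
    ((n - 1).factorial : ℂ) * coeff (n - 1) (h ^ n * derivativeFun (φ ^ k * g)) =
      (n.factorial : ℂ) * coeff n ((psComp φ ω) ^ k * psComp g ω) :=
  stmt4_general φ g h hh0 ω hω0 hω n k hn
end
end

section
/- Assume g_0 ≠ 0 and let B be an upper triangular matrix satisfying A·B = B·A = I. Then for every nonnegative integer s and all 1 ≤ k ≤ n, [B^s]_{k,n} = (a_k/a_n) times the coefficient of t^{n-k} in the power series (g(t)^{-1})^s, where g(t) = ∑_{j≥0} g_j t^j and g^{-1} denotes the multiplicative inverse of g in the ring of formal power series. -/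
open PowerSeries Finset

noncomputable section

/-!
Writing `D = diag(a_n)` and `T_f` for the upper triangular Toeplitz matrix of a power series `f`,
the matrix `A` is `D T_g D⁻¹`. Since `f ↦ T_f` is multiplicative and `D` cancels in products,
`D T_{g⁻¹} D⁻¹` is a left inverse of `A`; a left inverse of a triangular matrix with nonzero
diagonal is unique, so it is `B`, and `B^s = D T_{(g⁻¹)^s} D⁻¹`.
-/

/-- Agreement on `1 ≤ k ≤ n`, the only entries that products see. -/
def UpperEq (P Q : ℕ → ℕ → ℂ) : Prop :=
  ∀ k n, 1 ≤ k → k ≤ n → P k n = Q k n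

/-- The matrix `D T_f D⁻¹`. -/
def scaledToeplitz (a : ℕ → ℂ) (f : PowerSeries ℂ) : ℕ → ℕ → ℂ :=
  fun k n => a k / a n * coeff (n - k) f

lemma triMul_congr {P P' Q Q' : ℕ → ℕ → ℂ} (hP : UpperEq P P') (hQ : UpperEq Q Q') :
    UpperEq (triMul P Q) (triMul P' Q') := by
  intro k n hk _
  refine sum_congr rfl fun j hj => ?_
  rw [mem_Icc] at hj
  rw [hP k j hk hj.1, hQ j n (hk.trans hj.1) hj.2]

lemma triPow_congr {P Q : ℕ → ℕ → ℂ} (h : UpperEq P Q) (s : ℕ) :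
    UpperEq (triPow P s) (triPow Q s) := by
  induction s with
  | zero => exact fun _ _ _ _ => rfl
  | succ s ih => exact triMul_congr ih h

lemma sum_Icc_coeff_mul_coeff (f₁ f₂ : PowerSeries ℂ) {k n : ℕ} (hkn : k ≤ n) :
    ∑ j ∈ Icc k n, coeff (j - k) f₁ * coeff (n - j) f₂ = coeff (n - k) (f₁ * f₂) := by
  rw [coeff_mul, Nat.sum_antidiagonal_eq_sum_range_succ_mk, ← Ico_add_one_right_eq_Icc,
    sum_Ico_eq_sum_range, show n + 1 - k = n - k + 1 by omega]
  refine sum_congr rfl fun i hi => ?_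
  rw [mem_range] at hi
  rw [show k + i - k = i by omega, show n - (k + i) = n - k - i by omega]

section scaledToeplitz

variable {a : ℕ → ℂ} (ha : ∀ n, 1 ≤ n → a n ≠ 0)
include ha

lemma triId_upperEq_scaledToeplitz_one : UpperEq triId (scaledToeplitz a 1) := by
  intro k n hk hkn
  simp only [triId, scaledToeplitz, coeff_one]
  rcases hkn.eq_or_lt with rfl | hlt
  · simp [div_self (ha k hk)]
  · simp [hlt.ne, show n - k ≠ 0 by omega]

lemma triMul_scaledToeplitz (f₁ f₂ : PowerSeries ℂ) :
    UpperEq (triMul (scaledToeplitz a f₁) (scaledToeplitz a f₂)) (scaledToeplitz a (f₁ * f₂)) := by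
  intro k n hk hkn
  have hterm : ∀ j ∈ Icc k n, scaledToeplitz a f₁ k j * scaledToeplitz a f₂ j n
      = a k / a n * (coeff (j - k) f₁ * coeff (n - j) f₂) := by
    intro j hj
    have haj := ha j (hk.trans (mem_Icc.mp hj).1)
    simp only [scaledToeplitz]
    field_simp
  rw [triMul, sum_congr rfl hterm, ← mul_sum, sum_Icc_coeff_mul_coeff f₁ f₂ hkn]
  rfl

lemma triPow_scaledToeplitz (f : PowerSeries ℂ) (s : ℕ) :
    UpperEq (triPow (scaledToeplitz a f) s) (scaledToeplitz a (f ^ s)) := by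
  induction s with
  | zero => rw [pow_zero]; exact triId_upperEq_scaledToeplitz_one ha
  | succ s ih =>
    intro k n hk hkn
    rw [pow_succ, ← triMul_scaledToeplitz ha _ _ k n hk hkn]
    exact triMul_congr ih (fun _ _ _ _ => rfl) k n hk hkn

end scaledToeplitz

lemma upperEq_of_triMul_right_cancel {P Q A : ℕ → ℕ → ℂ} (hA : ∀ n, 1 ≤ n → A n n ≠ 0)
    (h : UpperEq (triMul P A) (triMul Q A)) : UpperEq P Q := by
  intro k n
  induction n using Nat.strong_induction_on with
  | _ n ih =>
    intro hk hkn
    have hdiff : ∑ j ∈ Icc k n, (P k j - Q k j) * A j n = 0 := by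
      simp only [sub_mul, sum_sub_distrib]
      exact sub_eq_zero.mpr (h k n hk hkn)
    rw [sum_eq_single_of_mem n (mem_Icc.mpr ⟨hkn, le_rfl⟩) fun j hj hjn => by
      rw [ih j (lt_of_le_of_ne (mem_Icc.mp hj).2 hjn) hk (mem_Icc.mp hj).1, sub_self,
        zero_mul]] at hdiff
    exact sub_eq_zero.mp ((mul_eq_zero.mp hdiff).resolve_right (hA n (hk.trans hkn)))

lemma upperEq_scaledToeplitz_inv_of_triMul_eq_triId {a g : ℕ → ℂ} (ha : ∀ n, 1 ≤ n → a n ≠ 0)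
    (hg0 : g 0 ≠ 0) {A B : ℕ → ℕ → ℂ} (hA : UpperEq A (scaledToeplitz a (mk g)))
    (hBA : UpperEq (triMul B A) triId) : UpperEq B (scaledToeplitz a (mk g)⁻¹) := by
  have hdiag : ∀ n, 1 ≤ n → A n n ≠ 0 := fun n hn => by
    simpa [hA n n hn le_rfl, scaledToeplitz, div_self (ha n hn)] using hg0
  refine upperEq_of_triMul_right_cancel hdiag fun k n hk hkn => ?_
  rw [hBA k n hk hkn, triMul_congr (fun _ _ _ _ => rfl) hA k n hk hkn,
    triMul_scaledToeplitz ha _ _ k n hk hkn, PowerSeries.inv_mul_cancel _ (by simpa using hg0),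
    triId_upperEq_scaledToeplitz_one ha k n hk hkn]

theorem stmt10_general (a : ℕ → ℂ) (ha : ∀ n, 1 ≤ n → a n ≠ 0)
    (g : ℕ → ℂ) (hg0 : g 0 ≠ 0)
    (A B : ℕ → ℕ → ℂ)
    (hA : ∀ k n, 1 ≤ k → k ≤ n → A k n = a k / a n * g (n - k))
    (hBA : ∀ k n, 1 ≤ k → 1 ≤ n → triMul B A k n = triId k n)
    (s : ℕ) (k n : ℕ) (hk : 1 ≤ k) (hkn : k ≤ n) :
    triPow B s k n = a k / a n * PowerSeries.coeff (n - k) (((PowerSeries.mk g)⁻¹) ^ s) := by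
  have hB : UpperEq B (scaledToeplitz a (mk g)⁻¹) :=
    upperEq_scaledToeplitz_inv_of_triMul_eq_triId ha hg0
      (fun k n hk hkn => by rw [hA k n hk hkn, scaledToeplitz, coeff_mk])
      (fun k n hk hkn => hBA k n hk (hk.trans hkn))
  rw [triPow_congr hB s k n hk hkn]
  exact triPow_scaledToeplitz ha _ s k n hk hkn

/-- Corollary: if `g_0 ≠ 0` and `B` is an upper triangular two-sided inverse of the
Toeplitz-type matrix `[A]_{k,n} = (a_k/a_n)·g_{n-k}`, then
`[B^s]_{k,n} = (a_k/a_n)·[t^{n-k}]((g(t)^{-1})^s)`. -/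
theorem stmt10 (a : ℕ → ℂ) (ha : ∀ n, 1 ≤ n → a n ≠ 0)
    (g : ℕ → ℂ) (hg0 : g 0 ≠ 0)
    (A B : ℕ → ℕ → ℂ)
    (hAtri : ∀ k n, n < k → A k n = 0)
    (hBtri : ∀ k n, n < k → B k n = 0)
    (hA : ∀ k n, 1 ≤ k → k ≤ n → A k n = a k / a n * g (n - k))
    (hAB : ∀ k n, 1 ≤ k → 1 ≤ n → triMul A B k n = triId k n)
    (hBA : ∀ k n, 1 ≤ k → 1 ≤ n → triMul B A k n = triId k n)
    (s : ℕ) (k n : ℕ) (hk : 1 ≤ k) (hkn : k ≤ n) :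
    triPow B s k n = a k / a n * PowerSeries.coeff (n - k) (((PowerSeries.mk g)⁻¹) ^ s) :=
  stmt10_general a ha g hg0 A B hA hBA s k n hk hkn
end
end

section
/- Let α, β be complex numbers and let A be the upper triangular matrix with entries [A]_{k,n} = C(n,k)·β^{n-k}·(α+n-1)_{n-k} for 1 ≤ k ≤ n. Then for every complex number z and all 1 ≤ k ≤ n, the series ∑_{s=0}^{∞} [A^s]_{k,n}·z^s/s! converges and equals [A]_{k,n}·B_{n-k}(z)·e^z, where B_m(z) = ∑_{j=0}^{m} S(m,j)·z^j is the Bell polynomial and S(m,j) is the Stirling number of the second kind. -/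
open PowerSeries Finset

noncomputable section

/-- The falling factorial `(x)_m = x(x-1)⋯(x-m+1)` of a complex number, `(x)_0 = 1`. -/
def fallFac (x : ℂ) : ℕ → ℂ
  | 0 => 1
  | m + 1 => fallFac x m * (x - m)

/-- Stirling numbers of the second kind: `S(m+1,j+1) = (j+1)·S(m,j+1) + S(m,j)`. -/
def stirling2 : ℕ → ℕ → ℕ
  | 0, 0 => 1
  | 0, _ + 1 => 0
  | _ + 1, 0 => 0
  | m + 1, j + 1 => (j + 1) * stirling2 m (j + 1) + stirling2 m j

/-- The Bell polynomial `B_m(z) = ∑_{j=0}^{m} S(m,j)·z^j`. -/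
def bellPoly (m : ℕ) (z : ℂ) : ℂ :=
  ∑ j ∈ Finset.range (m + 1), (stirling2 m j : ℂ) * z ^ j

/-! The entries of `A` satisfy `[A]_{k,j}[A]_{j,n} = C(n-k, j-k)·[A]_{k,n}`, so multiplying by `A`
is a binomial convolution and `[A^s]_{k,n} = s^(n-k)·[A]_{k,n}`. The series is therefore
`[A]_{k,n}·∑ s^m z^s/s!` with `m = n-k`, which Dobinski's formula evaluates: expanding
`s^m = ∑ S(m,j)·(s)_j` and shifting indices gives `∑ (s)_j z^s/s! = z^j e^z`. -/

lemma fallFac_eq_eval_descPochhammer (x : ℂ) (m : ℕ) :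
    fallFac x m = (descPochhammer ℂ m).eval x := by
  induction m with
  | zero => simp [fallFac]
  | succ m ih => rw [fallFac, ih, descPochhammer_succ_eval]

lemma fallFac_add (x : ℂ) (a b : ℕ) :
    fallFac x (a + b) = fallFac x a * fallFac (x - a) b := by
  simp only [fallFac_eq_eval_descPochhammer, ← descPochhammer_mul, Polynomial.eval_mul,
    Polynomial.eval_comp, Polynomial.eval_sub, Polynomial.eval_X, Polynomial.eval_natCast]

lemma stirling2_eq_stirlingSecond (m j : ℕ) : stirling2 m j = Nat.stirlingSecond m j := by
  induction m generalizing j with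
  | zero => cases j <;> rfl
  | succ m ih => cases j <;> simp [stirling2, Nat.stirlingSecond, ih]

lemma pow_eq_sum_stirlingSecond_mul_eval_descPochhammer {R : Type*} [CommRing R] (x : R)
    (m : ℕ) :
    x ^ m = ∑ j ∈ range (m + 1), (m.stirlingSecond j : R) * (descPochhammer R j).eval x := by
  induction m with
  | zero => simp
  | succ m ih =>
    set P : ℕ → R := fun j => (descPochhammer R j).eval x
    have hxP : ∀ j, P j * x = P (j + 1) + j * P j := fun j => by
      simp only [P, descPochhammer_succ_eval]; ring
    have hlast : (m.stirlingSecond (m + 1) : R) = 0 := by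
      rw [Nat.stirlingSecond_eq_zero_of_lt m.lt_succ_self, Nat.cast_zero]
    calc x ^ (m + 1)
        = ∑ j ∈ range (m + 1),
            (m.stirlingSecond j * P (j + 1) + j * m.stirlingSecond j * P j) := by
          rw [pow_succ, ih, sum_mul]
          exact sum_congr rfl fun j _ => by rw [mul_assoc, hxP]; ring
      _ = ∑ j ∈ range (m + 1), m.stirlingSecond j * P (j + 1)
            + ∑ j ∈ range (m + 2), j * m.stirlingSecond j * P j := by
          rw [sum_add_distrib, sum_range_succ _ (m + 1), hlast, mul_zero, zero_mul, add_zero]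
      _ = ∑ j ∈ range (m + 1),
            ((j + 1) * m.stirlingSecond (j + 1) + m.stirlingSecond j) * P (j + 1) := by
          rw [sum_range_succ' (fun j => (j : R) * m.stirlingSecond j * P j)]
          simp only [Nat.cast_zero, zero_mul, add_zero, Nat.cast_add, Nat.cast_one,
            ← sum_add_distrib]
          exact sum_congr rfl fun j _ => by ring
      _ = ∑ j ∈ range (m + 2), ((m + 1).stirlingSecond j : R) * P j := by
          rw [sum_range_succ' _ (m + 1)]
          simp [Nat.stirlingSecond_succ_succ]

lemma hasSum_descFactorial_mul_pow_div_factorial (z : ℂ) (j : ℕ) :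
    HasSum (fun s : ℕ => (s.descFactorial j : ℂ) * z ^ s / s.factorial)
      (z ^ j * Complex.exp z) := by
  rw [← hasSum_nat_add_iff' j]
  have hvanish : ∑ s ∈ range j, (s.descFactorial j : ℂ) * z ^ s / s.factorial = 0 :=
    sum_eq_zero fun s hs => by simp [Nat.descFactorial_eq_zero_iff_lt.2 (mem_range.1 hs)]
  rw [hvanish, sub_zero, Complex.exp_eq_exp_ℂ]
  refine ((NormedSpace.expSeries_div_hasSum_exp z).mul_left (z ^ j)).congr_fun fun t => ?_
  have hdesc : ((t + j).descFactorial j : ℂ) ≠ 0 := by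
    exact_mod_cast (Nat.descFactorial_pos.2 (Nat.le_add_left j t)).ne'
  rw [← Nat.factorial_mul_descFactorial (Nat.le_add_left j t), Nat.add_sub_cancel, pow_add]
  push_cast
  field_simp

lemma hasSum_bellPoly_mul_exp (z : ℂ) (m : ℕ) :
    HasSum (fun s : ℕ => (s : ℂ) ^ m * z ^ s / s.factorial) (bellPoly m z * Complex.exp z) := by
  have hsum := hasSum_sum fun j (_ : j ∈ range (m + 1)) =>
    (hasSum_descFactorial_mul_pow_div_factorial z j).mul_left (m.stirlingSecond j : ℂ)
  have hval : bellPoly m z * Complex.exp z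
      = ∑ j ∈ range (m + 1), (m.stirlingSecond j : ℂ) * (z ^ j * Complex.exp z) := by
    simp only [bellPoly, stirling2_eq_stirlingSecond, sum_mul, mul_assoc]
  rw [hval]
  refine hsum.congr_fun fun s => ?_
  rw [pow_eq_sum_stirlingSecond_mul_eval_descPochhammer (s : ℂ) m, sum_mul, sum_div]
  simp only [descPochhammer_eval_eq_descFactorial, mul_assoc, mul_div_assoc]

def genPascal (α β : ℂ) (k n : ℕ) : ℂ :=
  (n.choose k : ℂ) * β ^ (n - k) * fallFac (α + n - 1) (n - k)

lemma genPascal_self (α β : ℂ) (k : ℕ) : genPascal α β k k = 1 := by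
  simp [genPascal, fallFac]

lemma genPascal_mul_genPascal (α β : ℂ) {k j n : ℕ} (hkj : k ≤ j) (hjn : j ≤ n) :
    genPascal α β k j * genPascal α β j n = (n - k).choose (j - k) * genPascal α β k n := by
  have hchoose : (j.choose k : ℂ) * n.choose j = (n - k).choose (j - k) * n.choose k := by
    exact_mod_cast by rw [mul_comm, Nat.choose_mul hkj, mul_comm]
  have hpow : β ^ (n - k) = β ^ (j - k) * β ^ (n - j) := by
    rw [← pow_add, add_comm, Nat.sub_add_sub_cancel hjn hkj]
  have hfall : fallFac (α + n - 1) (n - k)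
      = fallFac (α + n - 1) (n - j) * fallFac (α + j - 1) (j - k) := by
    rw [← Nat.sub_add_sub_cancel hjn hkj, fallFac_add, Nat.cast_sub hjn]
    ring_nf
  simp only [genPascal, hpow, hfall]
  linear_combination (β ^ (j - k) * β ^ (n - j) * fallFac (α + n - 1) (n - j)
    * fallFac (α + j - 1) (j - k)) * hchoose

lemma triPow_apply_eq_pow_mul {A : ℕ → ℕ → ℂ} (hdiag : ∀ k, 1 ≤ k → A k k = 1)
    (hmul : ∀ k j n, 1 ≤ k → k ≤ j → j ≤ n →
      A k j * A j n = (n - k).choose (j - k) * A k n)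
    (s : ℕ) {k n : ℕ} (hk : 1 ≤ k) (hkn : k ≤ n) :
    triPow A s k n = (s : ℂ) ^ (n - k) * A k n := by
  induction s generalizing n with
  | zero =>
    rcases hkn.eq_or_lt with rfl | hlt
    · simp [triPow, triId, hdiag k hk]
    · simp [triPow, triId, hlt.ne, Nat.sub_ne_zero_of_lt hlt]
  | succ s ih =>
    calc triPow A (s + 1) k n = ∑ j ∈ Icc k n, triPow A s k j * A j n := rfl
      _ = ∑ j ∈ Icc k n, (s : ℂ) ^ (j - k) * (n - k).choose (j - k) * A k n :=
          sum_congr rfl fun j hj => by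
            obtain ⟨hkj, hjn⟩ := mem_Icc.1 hj
            rw [ih hkj, mul_assoc, hmul k j n hk hkj hjn, mul_assoc]
      _ = (∑ i ∈ range (n - k + 1), (s : ℂ) ^ i * 1 ^ (n - k - i) * (n - k).choose i)
            * A k n := by
          rw [← sum_mul, ← Finset.Ico_add_one_right_eq_Icc, sum_Ico_eq_sum_range,
            Nat.sub_add_comm hkn]
          simp
      _ = ((s + 1 : ℕ) : ℂ) ^ (n - k) * A k n := by rw [← add_pow]; push_cast; rfl

theorem stmt16_general (α β : ℂ)
    (A : ℕ → ℕ → ℂ)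
    (hA : ∀ k n, 1 ≤ k → k ≤ n →
      A k n = (n.choose k : ℂ) * β ^ (n - k) * fallFac (α + n - 1) (n - k))
    (z : ℂ) (k n : ℕ) (hk : 1 ≤ k) (hkn : k ≤ n) :
    HasSum (fun s : ℕ => triPow A s k n * z ^ s / (s.factorial : ℂ))
      (A k n * bellPoly (n - k) z * Complex.exp z) := by
  have hpow (s : ℕ) : triPow A s k n = (s : ℂ) ^ (n - k) * A k n :=
    triPow_apply_eq_pow_mul (fun k hk => (hA k k hk le_rfl).trans (genPascal_self α β k))
      (fun k j n hk hkj hjn => by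
        rw [hA k j hk hkj, hA j n (hk.trans hkj) hjn, hA k n hk (hkj.trans hjn)]
        exact genPascal_mul_genPascal α β hkj hjn)
      s hk hkn
  rw [mul_assoc]
  refine ((hasSum_bellPoly_mul_exp z (n - k)).mul_left (A k n)).congr_fun fun s => ?_
  rw [hpow]
  ring

/-- Example: for `[A]_{k,n} = C(n,k)·β^{n-k}·(α+n-1)_{n-k}`, the matrix exponential series
converges entrywise: `∑_{s≥0} [A^s]_{k,n}·z^s/s! = [A]_{k,n}·B_{n-k}(z)·e^z`. -/
theorem stmt16 (α β : ℂ)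
    (A : ℕ → ℕ → ℂ)
    (hAtri : ∀ k n, n < k → A k n = 0)
    (hA : ∀ k n, 1 ≤ k → k ≤ n →
      A k n = (n.choose k : ℂ) * β ^ (n - k) * fallFac (α + n - 1) (n - k))
    (z : ℂ) (k n : ℕ) (hk : 1 ≤ k) (hkn : k ≤ n) :
    HasSum (fun s : ℕ => triPow A s k n * z ^ s / (s.factorial : ℂ))
      (A k n * bellPoly (n - k) z * Complex.exp z) :=
  stmt16_general α β A hA z k n hk hkn
end
end
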